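/- arXiv:2412.00735 — 12 statements merged into one kernel-verified Lean document; each statement's English description precedes it below -/
import Mathlib

section
/- Let a(∂,λ) ∈ ℂ[∂,λ] be a polynomial in two variables satisfying a(∂+λ,μ)·a(∂,λ) = (λ−μ)·a(∂,λ+μ) + a(∂+μ,λ)·a(∂,μ) for all ∂,λ,μ ∈ ℂ. Then either a = 0, or there exist β, C₁ ∈ ℂ such that a(∂,λ) = ∂ + βλ + C₁. -/
/-!
Write `a(∂, λ) = ∑ pₖ(λ) ∂ᵏ` with `n = deg_∂ a`. For fixed `λ, μ` both products in the identity
have degree `2n` in `∂` with the same leading coefficient, and their `∂^(2n-1)` coefficients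
differ by `n (λ - μ) pₙ(λ) pₙ(μ)`; the middle term has degree `n`, so `n ≥ 2` is impossible and
`a = b₀(λ) + b₁(λ) ∂`. The `∂`-coefficient of the identity gives `b₁(λ) b₁(μ) = b₁(λ + μ)` for
`λ ≠ μ`, and comparing degrees in `b₁(λ) b₁(λ + 1) = b₁(2λ + 1)` makes `b₁` a constant, hence
`0` or `1`. The constant coefficient then reads `(λ - μ) b₀(λ + μ) = 0` (so `a = 0`) or
`λ b₀(λ) - μ b₀(μ) = (λ - μ) b₀(λ + μ)`, and two instances of the latter solve for `b₀` as an
affine function.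
-/

open Polynomial

noncomputable def ev2 (f : MvPolynomial (Fin 2) ℂ) (x y : ℂ) : ℂ :=
  MvPolynomial.eval ![x, y] f

namespace Polynomial

variable {R : Type*} [CommRing R] {u v f : R[X]} {n : ℕ}

theorem coeff_mul_two_mul_add_one (hu : u.natDegree ≤ n + 1) (hv : v.natDegree ≤ n + 1) :
    (u * v).coeff (2 * n + 1) = u.coeff n * v.coeff (n + 1) + u.coeff (n + 1) * v.coeff n := by
  rw [coeff_mul, Finset.sum_eq_add_of_mem (n, n + 1) (n + 1, n) (by simp; omega)
    (by simp; omega) (by simp)]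
  rintro ⟨i, j⟩ hij hne
  replace hij : i + j = 2 * n + 1 := Finset.HasAntidiagonal.mem_antidiagonal.1 hij
  simp only [ne_eq, Prod.mk.injEq, not_and_or] at hne
  rcases le_or_gt i n with hi | hi
  · rw [coeff_eq_zero_of_natDegree_lt (p := v) (by omega), mul_zero]
  · rw [coeff_eq_zero_of_natDegree_lt (p := u) (by omega), zero_mul]

theorem coeff_taylor_of_natDegree_le (r : R) (hf : f.natDegree ≤ n) :
    (taylor r f).coeff n = f.coeff n := by
  rw [taylor_coeff, eq_C_of_natDegree_le_zero ((natDegree_hasseDeriv_le f n).trans (by omega)),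
    eval_C, hasseDeriv_coeff, zero_add, Nat.choose_self, Nat.cast_one, one_mul]

theorem coeff_taylor_of_natDegree_le_succ (r : R) (hf : f.natDegree ≤ n + 1) :
    (taylor r f).coeff n = f.coeff n + (n + 1) * r * f.coeff (n + 1) := by
  have hd : (hasseDeriv n f).natDegree < 2 := (natDegree_hasseDeriv_le f n).trans_lt (by omega)
  rw [taylor_coeff, eval_eq_sum_range' hd, Finset.sum_range_succ, Finset.sum_range_one,
    hasseDeriv_coeff, hasseDeriv_coeff, zero_add, Nat.choose_self, add_comm 1 n,
    Nat.choose_succ_self_right]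
  push_cast
  ring

theorem coeff_taylor_mul_sub_taylor_mul (hu : u.natDegree ≤ n + 1) (hv : v.natDegree ≤ n + 1)
    (r s : R) : (taylor r u * v - taylor s v * u).coeff (2 * n + 1)
      = (n + 1) * (r - s) * (u.coeff (n + 1) * v.coeff (n + 1)) := by
  have hu' : (taylor r u).natDegree ≤ n + 1 := (natDegree_taylor u r).trans_le hu
  have hv' : (taylor s v).natDegree ≤ n + 1 := (natDegree_taylor v s).trans_le hv
  rw [coeff_sub, coeff_mul_two_mul_add_one hu' hv, coeff_mul_two_mul_add_one hv' hu,
    coeff_taylor_of_natDegree_le r hu, coeff_taylor_of_natDegree_le s hv,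
    coeff_taylor_of_natDegree_le_succ r hu, coeff_taylor_of_natDegree_le_succ s hv]
  ring

variable {K : Type*} [Field K] [CharZero K]

theorem eq_zero_of_eval_mul_eval_add_one {p : K[X]} (h : ∀ l, p.eval l * p.eval (l + 1) = 0) :
    p = 0 := by
  have hmul : p * taylor 1 p = 0 := funext fun l => by simp [taylor_eval, h]
  exact (mul_eq_zero.1 hmul).elim id (taylor_eq_zero 1 p).1

theorem eq_zero_or_eq_one_of_eval_mul_eval {p : K[X]}
    (h : ∀ l m, l ≠ m → p.eval l * p.eval m = p.eval (l + m)) : p = 0 ∨ p = 1 := by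
  have hcomp : p * taylor 1 p = p.comp (C 2 * X + C 1) := funext fun l => by
    simpa [taylor_eval, two_mul, add_assoc] using h l (l + 1) (by simp)
  obtain ⟨c, rfl⟩ : ∃ c, p = C c := by
    rcases eq_or_ne p 0 with rfl | hp
    · exact ⟨0, C_0.symm⟩
    have hdeg := congrArg natDegree hcomp
    rw [natDegree_mul hp ((taylor_eq_zero 1 p).not.2 hp), natDegree_taylor, natDegree_comp,
      natDegree_linear two_ne_zero] at hdeg
    exact ⟨_, eq_C_of_natDegree_eq_zero (by omega)⟩
  have hc : c * (c - 1) = 0 := by linear_combination (by simpa using h 1 0 one_ne_zero : c * c = c)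
  rcases mul_eq_zero.1 hc with hc | hc
  · exact .inl (by rw [hc, C_0])
  · exact .inr (by rw [sub_eq_zero.1 hc, C_1])

end Polynomial

theorem eq_affine_of_mul_sub_mul_eq {K : Type*} [Field K] [CharZero K] {g : K → K}
    (h : ∀ l m, l * g l - m * g m = (l - m) * g (l + m)) (t : K) :
    g t = (g 1 - g (-1)) / 2 * t + (g 1 + g (-1)) / 2 := by
  have h₁ := h (t + 1) (-1)
  have h₂ := h t 1
  rw [add_neg_cancel_right] at h₁
  linear_combination ((t - 1) * h₁ + (t + 1) * h₂) / 2

def IsJacobiSolution {R : Type*} [CommRing R] (F : R → R → R) : Prop :=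
  ∀ d l m, F (d + l) m * F d l = (l - m) * F d (l + m) + F (d + m) l * F d m

namespace IsJacobiSolution

variable {K : Type*} [Field K] [CharZero K] {F : K → K → K}

theorem natDegree_le_one (hF : IsJacobiSolution F) {B : K[X][X]}
    (hB : ∀ d l, F d l = (B.map (evalRingHom l)).eval d) : B.natDegree ≤ 1 := by
  by_contra! hdeg
  obtain ⟨k, hk, hk1⟩ : ∃ k, B.natDegree = k + 1 ∧ 1 ≤ k := ⟨B.natDegree - 1, by omega, by omega⟩
  set q : K → K[X] := fun l => B.map (evalRingHom l)
  have hq : ∀ l, (q l).natDegree ≤ k + 1 := fun l => hk ▸ natDegree_map_le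
  have hfiber : ∀ l m, taylor l (q m) * q l - taylor m (q l) * q m = C (l - m) * q (l + m) :=
    fun l m => funext fun d => by
      simp only [eval_sub, eval_mul, taylor_eval, eval_C, q, ← hB]
      linear_combination hF d l m
  have hlead : ∀ l, B.leadingCoeff.eval l * B.leadingCoeff.eval (l + 1) = 0 := fun l => by
    have h := congrArg (coeff · (2 * k + 1)) (hfiber (l + 1) l)
    simp only [coeff_taylor_mul_sub_taylor_mul (hq l) (hq (l + 1)), coeff_C_mul,
      coeff_eq_zero_of_natDegree_lt ((hq _).trans_lt (by omega : k + 1 < 2 * k + 1)), mul_zero,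
      q, coeff_map, coe_evalRingHom, ← hk] at h
    have hne : ((k : K) + 1) * (l + 1 - l) ≠ 0 := by
      rw [add_sub_cancel_left, mul_one]
      exact Nat.cast_add_one_ne_zero k
    exact (mul_eq_zero.1 h).resolve_left hne
  exact leadingCoeff_ne_zero.2 (ne_zero_of_natDegree_gt hdeg)
    (eq_zero_of_eval_mul_eval_add_one hlead)

theorem eq_zero_or_affine_of_linear (hF : IsJacobiSolution F) {b₀ b₁ : K[X]}
    (hlin : ∀ d l, F d l = b₀.eval l + b₁.eval l * d) :
    (∀ d l, F d l = 0) ∨ ∃ β C₁ : K, ∀ d l, F d l = d + β * l + C₁ := by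
  have hconst : ∀ l m, l * b₁.eval m * b₀.eval l - m * b₁.eval l * b₀.eval m
      = (l - m) * b₀.eval (l + m) := fun l m => by
    have h := hF 0 l m
    simp only [hlin] at h
    linear_combination h
  have hexp : ∀ l m, l ≠ m → b₁.eval l * b₁.eval m = b₁.eval (l + m) := fun l m hlm => by
    have h : (l - m) * (b₁.eval l * b₁.eval m - b₁.eval (l + m)) = 0 := by
      have h₀ := hF 0 l m
      have h₁ := hF 1 l m
      simp only [hlin] at h₀ h₁
      linear_combination h₁ - h₀
    exact sub_eq_zero.1 ((mul_eq_zero.1 h).resolve_left (sub_ne_zero.2 hlm))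
  rcases eq_zero_or_eq_one_of_eval_mul_eval hexp with rfl | rfl
  · refine .inl fun d l => ?_
    have h := hconst (l / 2 + 1) (l / 2 - 1)
    rw [show l / 2 + 1 + (l / 2 - 1) = l by ring,
      show l / 2 + 1 - (l / 2 - 1) = (2 : K) by ring] at h
    simp only [eval_zero, zero_mul, mul_zero, sub_zero, zero_eq_mul, two_ne_zero, false_or] at h
    rw [hlin, h, eval_zero, zero_mul, add_zero]
  · refine .inr ⟨(b₀.eval 1 - b₀.eval (-1)) / 2, (b₀.eval 1 + b₀.eval (-1)) / 2, fun d l => ?_⟩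
    rw [hlin, eq_affine_of_mul_sub_mul_eq (g := fun t => b₀.eval t) (by simpa using hconst) l]
    simp only [eval_one]
    ring

theorem eq_zero_or_affine (hF : IsJacobiSolution F) {B : K[X][X]}
    (hB : ∀ d l, F d l = (B.map (evalRingHom l)).eval d) :
    (∀ d l, F d l = 0) ∨ ∃ β C₁ : K, ∀ d l, F d l = d + β * l + C₁ :=
  hF.eq_zero_or_affine_of_linear (b₀ := B.coeff 0) (b₁ := B.coeff 1) fun d l => by
    rw [hB]
    conv_lhs => rw [eq_X_add_C_of_natDegree_le_one (hF.natDegree_le_one hB)]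
    simp only [Polynomial.map_add, Polynomial.map_mul, map_C, map_X, eval_add, eval_mul, eval_C,
      eval_X, coe_evalRingHom]
    ring

end IsJacobiSolution

theorem MvPolynomial.exists_bivariate_eval_eq {R : Type*} [CommRing R]
    (a : MvPolynomial (Fin 2) R) :
    ∃ B : R[X][X], ∀ x y, MvPolynomial.eval ![x, y] a = (B.map (evalRingHom y)).eval x :=
  ⟨MvPolynomial.aeval ![Polynomial.X, Polynomial.C Polynomial.X] a, fun x y => by
    induction a using MvPolynomial.induction_on with
    | C r => simp
    | add p q hp hq => simp [hp, hq]
    | mul_X p i hp => fin_cases i <;> simp [hp]⟩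

theorem stmt0 (a : MvPolynomial (Fin 2) ℂ)
    (h : ∀ d l m : ℂ, ev2 a (d + l) m * ev2 a d l
      = (l - m) * ev2 a d (l + m) + ev2 a (d + m) l * ev2 a d m) :
    a = 0 ∨ ∃ β C₁ : ℂ, ∀ d l : ℂ, ev2 a d l = d + β * l + C₁ := by
  obtain ⟨B, hB⟩ := MvPolynomial.exists_bivariate_eval_eq a
  refine (IsJacobiSolution.eq_zero_or_affine (F := ev2 a) h hB).imp_left fun h₀ => ?_
  refine MvPolynomial.funext fun x => ?_
  have hx : ![x 0, x 1] = x := by ext i; fin_cases i <;> rfl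
  simpa [ev2, hx] using h₀ (x 0) (x 1)
end

section
/- Let b(∂,λ) ∈ ℂ[∂,λ] be a polynomial satisfying b(∂+λ,μ)·b(∂,λ) = b(∂+μ,λ)·b(∂,μ) for all ∂,λ,μ ∈ ℂ. Then b does not depend on ∂, i.e., there exists b₀(λ) ∈ ℂ[λ] with b(∂,λ) = b₀(λ). -/
/-!
Write `p_y = b(·, y)`. For fixed `l, m` the equation says `p_m(∂ + l) p_l(∂) = p_l(∂ + m) p_m(∂)`
in `ℂ[∂]`; translating a polynomial by `a` lowers the sum of its roots by `deg · a`, so comparing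
sums of roots gives `deg p_m · l = deg p_l · m` whenever `p_l, p_m ≠ 0`. If some `p_l` had
positive degree, every `m` with `p_m ≠ 0` would be one of the finitely many numbers
`k l / deg p_l` with `k ≤ deg b`, whereas `p_m ≠ 0` for all but finitely many `m`.
Hence every `p_y` is constant.
-/

open Polynomial

namespace Polynomial

variable {K : Type*} [Field K]

theorem roots_taylor (p : K[X]) (r : K) : (taylor r p).roots = p.roots.map (· - r) := by
  simpa [taylor_apply] using roots_comp_C_mul_X_add_C p 1 r isUnit_one

theorem sum_roots_taylor [IsAlgClosed K] (p : K[X]) (r : K) :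
    (taylor r p).roots.sum = p.roots.sum - p.natDegree * r := by
  rw [roots_taylor, Multiset.sum_map_sub, Multiset.map_const', Multiset.sum_replicate,
    IsAlgClosed.card_roots_eq_natDegree, nsmul_eq_mul, Multiset.map_id']

theorem natDegree_mul_eq_of_taylor_mul_eq_taylor_mul [IsAlgClosed K] {p q : K[X]} {a c : K}
    (hp : p ≠ 0) (hq : q ≠ 0) (h : taylor a q * p = taylor c p * q) :
    (q.natDegree : K) * a = p.natDegree * c := by
  have hsum := congrArg (fun f => f.roots.sum) h
  simp only [roots_mul (mul_ne_zero ((taylor_eq_zero a q).not.2 hq) hp),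
    roots_mul (mul_ne_zero ((taylor_eq_zero c p).not.2 hp) hq), Multiset.sum_add,
    sum_roots_taylor] at hsum
  linear_combination -hsum

end Polynomial

theorem MvPolynomial.polynomial_eval_aeval {R σ : Type*} [CommSemiring R] (g : σ → R[X])
    (f : MvPolynomial σ R) (x : R) :
    (aeval g f).eval x = eval (fun i => (g i).eval x) f := by
  rw [aeval_def, polynomial_eval_eval₂]
  congr 1
  ext
  simp

section Slices

variable (b : MvPolynomial (Fin 2) ℂ)

noncomputable def sliceFst (y : ℂ) : ℂ[X] := MvPolynomial.aeval ![X, C y] b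

noncomputable def sliceSnd (x : ℂ) : ℂ[X] := MvPolynomial.aeval ![C x, X] b

theorem eval_sliceFst (x y : ℂ) : (sliceFst b y).eval x = ev2 b x y := by
  rw [sliceFst, MvPolynomial.polynomial_eval_aeval, ev2]
  congr
  funext i
  fin_cases i <;> simp

theorem eval_sliceSnd (x y : ℂ) : (sliceSnd b x).eval y = ev2 b x y := by
  rw [sliceSnd, MvPolynomial.polynomial_eval_aeval, ev2]
  congr
  funext i
  fin_cases i <;> simp

theorem natDegree_sliceFst_le (y : ℂ) : (sliceFst b y).natDegree ≤ b.totalDegree :=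
  (MvPolynomial.aeval_natDegree_le b le_rfl _ (n := 1) fun i => by
    fin_cases i <;> simp).trans_eq (mul_one _)

theorem infinite_setOf_sliceFst_ne_zero {l : ℂ} (hl : sliceFst b l ≠ 0) :
    {m | sliceFst b m ≠ 0}.Infinite := by
  obtain ⟨x, hx⟩ : ∃ x, ev2 b x l ≠ 0 := by
    by_contra! h0
    exact hl (Polynomial.funext fun x => by rw [eval_sliceFst, h0, eval_zero])
  have hx : sliceSnd b x ≠ 0 := fun h0 => hx (by rw [← eval_sliceSnd, h0, eval_zero])
  refine (finite_setOfPred_isRoot hx).infinite_compl.mono fun m (hm : ¬IsRoot _ m) h0 => hm ?_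
  rw [IsRoot.def, eval_sliceSnd, ← eval_sliceFst, h0, eval_zero]

variable {b}

theorem taylor_sliceFst_mul_eq
    (h : ∀ d l m : ℂ, ev2 b (d + l) m * ev2 b d l = ev2 b (d + m) l * ev2 b d m) (l m : ℂ) :
    taylor l (sliceFst b m) * sliceFst b l = taylor m (sliceFst b l) * sliceFst b m :=
  Polynomial.funext fun d => by simpa [taylor_eval, eval_sliceFst, add_comm] using h d l m

theorem natDegree_sliceFst_eq_zero
    (h : ∀ d l m : ℂ, ev2 b (d + l) m * ev2 b d l = ev2 b (d + m) l * ev2 b d m) (l : ℂ) :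
    (sliceFst b l).natDegree = 0 := by
  by_contra hn
  have hl : sliceFst b l ≠ 0 := fun h0 => hn (by rw [h0, natDegree_zero])
  refine infinite_setOf_sliceFst_ne_zero b hl
    (((Finset.range (b.totalDegree + 1)).finite_toSet.image
      fun n : ℕ => (n : ℂ) * l / (sliceFst b l).natDegree).subset fun m hm => ?_)
  refine ⟨(sliceFst b m).natDegree, by simpa [Nat.lt_succ_iff] using natDegree_sliceFst_le b m, ?_⟩
  dsimp only
  rw [eq_comm, eq_div_iff (Nat.cast_ne_zero.2 hn),
    natDegree_mul_eq_of_taylor_mul_eq_taylor_mul hl hm (taylor_sliceFst_mul_eq h l m), mul_comm]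

end Slices

theorem stmt1 (b : MvPolynomial (Fin 2) ℂ)
    (h : ∀ d l m : ℂ, ev2 b (d + l) m * ev2 b d l = ev2 b (d + m) l * ev2 b d m) :
    ∃ b₀ : Polynomial ℂ, ∀ d l : ℂ, ev2 b d l = b₀.eval l := by
  refine ⟨sliceSnd b 0, fun d l => ?_⟩
  rw [eval_sliceSnd, ← eval_sliceFst, ← eval_sliceFst,
    eq_C_of_natDegree_eq_zero (natDegree_sliceFst_eq_zero h l), eval_C, eval_C]
end

section
/- Let f ∈ ℂ[∂,λ] satisfy (∂+2λ+2μ)·f(−λ−μ, λ) + (∂+2μ)·f(∂+μ, λ) = (∂+λ+2μ)·f(∂,λ) for all ∂, λ, μ ∈ ℂ. Then f is linear in ∂: there exist f₀, f₁ ∈ ℂ[λ] with f(∂,λ) = f₀(λ) + f₁(λ)·∂. -/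
/-!
Only the specialisation `μ = 0` is needed: it reads `λ f(∂, λ) = (∂ + 2λ) f(-λ, λ)`, so for
`λ ≠ 0` the function `∂ ↦ f(∂, λ)` is affine, with coefficients `f(0, λ)` and
`f(1, λ) - f(0, λ)`, which are polynomials in `λ`. Both sides of the resulting identity are
continuous in `λ`, so it extends from `λ ≠ 0` to `λ = 0`.
-/

open Polynomial

lemma continuous_ev2 (f : MvPolynomial (Fin 2) ℂ) (d : ℂ) : Continuous (ev2 f d) :=
  (MvPolynomial.continuous_eval f).comp (by fun_prop)

lemma eval_aeval_eq_ev2 (f : MvPolynomial (Fin 2) ℂ) (p : ℂ[X]) (l : ℂ) :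
    (MvPolynomial.aeval ![p, X] f).eval l = ev2 f (p.eval l) l := by
  rw [ev2, ← coe_evalRingHom, MvPolynomial.map_aeval]
  exact MvPolynomial.eval₂Hom_congr (by ext; simp) (by funext i; fin_cases i <;> simp) rfl

lemma eq_affine_of_forall_mul_eq {K : Type*} [Field K] {F : K → K} {l b c : K} (hl : l ≠ 0)
    (hF : ∀ d, l * F d = (d + b) * c) (d : K) : F d = F 0 + (F 1 - F 0) * d := by
  apply mul_left_cancel₀ hl
  linear_combination hF d - (1 - d) * hF 0 - d * hF 1

theorem stmt5 (f : MvPolynomial (Fin 2) ℂ)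
    (h : ∀ d l m : ℂ, (d + 2 * l + 2 * m) * ev2 f (-l - m) l
      + (d + 2 * m) * ev2 f (d + m) l = (d + l + 2 * m) * ev2 f d l) :
    ∃ f₀ f₁ : Polynomial ℂ, ∀ d l : ℂ, ev2 f d l = f₀.eval l + f₁.eval l * d := by
  have hμ0 : ∀ d l, l * ev2 f d l = (d + 2 * l) * ev2 f (-l) l := fun d l => by
    have H := h d l 0
    simp only [mul_zero, add_zero, sub_zero] at H
    linear_combination -H
  refine ⟨MvPolynomial.aeval ![0, X] f, MvPolynomial.aeval ![1, X] f - MvPolynomial.aeval ![0, X] f,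
    fun d => congrFun ((continuous_ev2 f d).ext_on (dense_compl_singleton 0) (by fun_prop)
      fun l hl => ?_)⟩
  simp only [eval_sub, eval_aeval_eq_ev2, eval_zero, eval_one]
  exact eq_affine_of_forall_mul_eq hl (hμ0 · l) d
end

section
/- Let f ∈ ℂ[∂,λ] satisfy (λ+μ)·f(−λ−μ, λ) + (∂+μ)·f(∂+μ, λ) = (∂+λ+2μ)·f(∂,λ) for all ∂, λ, μ ∈ ℂ. Then f does not depend on ∂, i.e., f(∂,λ) = f₀(λ) for some f₀ ∈ ℂ[λ]. -/
/-!
Taking `μ = 0` gives `λ · f(-λ, λ) = λ · f(∂, λ)`, so `f(∂, λ) = f(-λ, λ)` whenever `λ ≠ 0`.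
Both sides are polynomial, hence continuous, in `λ`, and `{0}ᶜ` is dense in `ℂ`, so the identity
holds for all `λ`; and `λ ↦ f(-λ, λ)` is the polynomial `f(-X, X)`.
-/

open Polynomial

theorem Polynomial.eval_mvPolynomial_aeval {σ R : Type*} [CommSemiring R]
    (g : σ → R[X]) (p : MvPolynomial σ R) (x : R) :
    (MvPolynomial.aeval g p).eval x = MvPolynomial.eval (fun i => (g i).eval x) p := by
  have := MvPolynomial.comp_aeval_apply (f := g) (Polynomial.aeval x) p
  simp only [Polynomial.coe_aeval_eq_eval] at this
  rw [this, ← MvPolynomial.coe_aeval_eq_eval]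
  rfl

theorem eval_aeval_neg_X_X (f : MvPolynomial (Fin 2) ℂ) (l : ℂ) :
    (MvPolynomial.aeval ![-X, X] f).eval l = ev2 f (-l) l := by
  have hpoint : (fun i => (![-X, X] i).eval l) = ![-l, l] := by
    funext i
    fin_cases i <;> simp
  rw [Polynomial.eval_mvPolynomial_aeval, hpoint, ev2]

theorem continuous_ev2_s6 (f : MvPolynomial (Fin 2) ℂ) {u v : ℂ → ℂ}
    (hu : Continuous u) (hv : Continuous v) : Continuous fun l => ev2 f (u l) (v l) :=
  (MvPolynomial.continuous_eval f).comp <|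
    hu.matrixVecCons (hv.matrixVecCons continuous_const)

theorem stmt6 (f : MvPolynomial (Fin 2) ℂ)
    (h : ∀ d l m : ℂ, (l + m) * ev2 f (-l - m) l
      + (d + m) * ev2 f (d + m) l = (d + l + 2 * m) * ev2 f d l) :
    ∃ f₀ : Polynomial ℂ, ∀ d l : ℂ, ev2 f d l = f₀.eval l := by
  refine ⟨MvPolynomial.aeval ![-X, X] f, fun d => congrFun ?_⟩
  simp_rw [eval_aeval_neg_X_X]
  refine (continuous_ev2_s6 f continuous_const continuous_id').ext_on (dense_compl_singleton 0)
    (continuous_ev2_s6 f continuous_neg continuous_id') fun l (hl : l ≠ 0) => ?_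
  have h₀ := h d l 0
  simp only [add_zero, mul_zero, sub_zero] at h₀
  exact mul_left_cancel₀ hl (by linear_combination -h₀)
end

section
/- Let β, C₁ ∈ ℂ and let e ∈ ℂ[∂] be a polynomial satisfying (∂+λ)·e(∂+λ) = (∂ + (2β−1)λ + 2C₁)·e(∂) for all ∂, λ ∈ ℂ. Then e is a constant polynomial; moreover, if e ≠ 0 then β = 1 and C₁ = 0. -/
open Polynomial

/-!
Setting `∂ = 0` leaves `λ · e(λ) = ((2β - 1)λ + 2C₁) · e(0)`: the polynomial `X * e` is affine,
so `e` is a constant `c`, and comparing the two sides at `λ = 0` and `λ = 1` gives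
`2C₁ c = 0` and `(2β - 2) c = 0`.
-/

namespace Polynomial

variable {R : Type*} [CommRing R] [IsDomain R] [Infinite R] {e : R[X]} {a b : R}

theorem eq_C_eval_zero_of_forall_mul_eval_eq (h : ∀ x, x * e.eval x = (a * x + b) * e.eval 0) :
    e = C (e.eval 0) := by
  have hX : X * e = C (a * e.eval 0) * X + C (b * e.eval 0) :=
    Polynomial.funext fun x => by
      simp only [eval_mul, eval_add, eval_X, eval_C]
      linear_combination h x
  ext n
  rcases n with _ | n
  · simp [coeff_zero_eq_eval_zero]
  · simpa [coeff_X_mul, coeff_C] using congr_arg (coeff · (n + 2)) hX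

theorem eq_one_and_eq_zero_of_forall_mul_eval_eq
    (h : ∀ x, x * e.eval x = (a * x + b) * e.eval 0) (he : e ≠ 0) : a = 1 ∧ b = 0 := by
  have hconst := eq_C_eval_zero_of_forall_mul_eval_eq h
  have hc : e.eval 0 ≠ 0 := fun h0 => he (by rw [hconst, h0, C_0])
  have hlin (x : R) : x * e.eval 0 = (a * x + b) * e.eval 0 := by
    have hx := h x
    rwa [hconst, eval_C, eval_C] at hx
  have hb : b = 0 := by simpa [hc, eq_comm] using hlin 0
  refine ⟨?_, hb⟩
  simpa [hb, eq_comm] using mul_right_cancel₀ hc (hlin 1)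

end Polynomial

theorem stmt8 (β C₁ : ℂ) (e : Polynomial ℂ)
    (h : ∀ d l : ℂ, (d + l) * e.eval (d + l) = (d + (2 * β - 1) * l + 2 * C₁) * e.eval d) :
    (∃ c : ℂ, e = Polynomial.C c) ∧ (e ≠ 0 → β = 1 ∧ C₁ = 0) := by
  have h0 (l : ℂ) : l * e.eval l = ((2 * β - 1) * l + 2 * C₁) * e.eval 0 := by
    simpa using h 0 l
  refine ⟨⟨_, eq_C_eval_zero_of_forall_mul_eval_eq h0⟩, fun he => ?_⟩
  obtain ⟨hβ, hC₁⟩ := eq_one_and_eq_zero_of_forall_mul_eval_eq h0 he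
  exact ⟨by linear_combination hβ / 2, by linear_combination hC₁ / 2⟩
end

section
/- Let f ∈ ℂ[∂,λ] satisfy (∂+λ+ν+2μ)·f(−λ−ν, λ) = (λ−ν)·f(∂+λ+ν, μ) for all ∂, λ, μ, ν ∈ ℂ. Then there exists a constant C ∈ ℂ such that f(∂,λ) = C·(∂+2λ). -/
open Polynomial

/- Specializing `λ = 1`, `ν = 0` and `∂ ↦ ∂ - 1` makes the right-hand side `g ∂ μ`, while the
left-hand side only involves the constant `g (-1) 1`. -/
theorem eq_mul_of_functional_eq {R : Type*} [CommRing R] (g : R → R → R)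
    (h : ∀ d l m n : R, (d + l + n + 2 * m) * g (-l - n) l = (l - n) * g (d + l + n) m)
    (d m : R) : g d m = g (-1) 1 * (d + 2 * m) := by
  have key := h (d - 1) 1 m 0
  rw [show (-1 : R) - 0 = -1 by ring, show d - 1 + 1 + 0 = d by ring] at key
  linear_combination -key

theorem stmt9 (f : MvPolynomial (Fin 2) ℂ)
    (h : ∀ d l m n : ℂ, (d + l + n + 2 * m) * ev2 f (-l - n) l
      = (l - n) * ev2 f (d + l + n) m) :
    ∃ C : ℂ, ∀ d l : ℂ, ev2 f d l = C * (d + 2 * l) :=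
  ⟨ev2 f (-1) 1, eq_mul_of_functional_eq (ev2 f) h⟩
end

section
/- Let g ∈ ℂ[∂,λ] satisfy (λ+ν)·(∂+λ+ν+2μ)·g(−λ−ν, λ) = (λ−ν)·(∂+λ+ν)·g(∂+λ+ν, μ) for all ∂, λ, μ, ν ∈ ℂ. Then g = 0. -/
open Polynomial

/- Taking `λ = 1`, `ν = -1` kills the left-hand side and leaves `2∂ · g(∂, μ) = 0`, so `g` vanishes
off the line `∂ = 0`; a polynomial doing that is zero, since `∂ · g` vanishes everywhere. -/

namespace MvPolynomial

theorem eq_zero_of_eval_eq_zero_of_ne_zero {R σ : Type*} [CommRing R] [IsDomain R] [Infinite R]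
    {f : MvPolynomial σ R} (i : σ) (hf : ∀ x : σ → R, x i ≠ 0 → eval x f = 0) : f = 0 := by
  have hXf : X i * f = 0 := funext fun x => by
    by_cases hx : x i = 0 <;> simp [hx, hf]
  exact (mul_eq_zero.mp hXf).resolve_left (X_ne_zero i)

end MvPolynomial

theorem stmt10 (g : MvPolynomial (Fin 2) ℂ)
    (h : ∀ d l m n : ℂ, (l + n) * (d + l + n + 2 * m) * ev2 g (-l - n) l
      = (l - n) * (d + l + n) * ev2 g (d + l + n) m) :
    g = 0 := by
  refine MvPolynomial.eq_zero_of_eval_eq_zero_of_ne_zero 0 fun x hx => ?_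
  have hx_eq : ![x 0, x 1] = x := by ext i; fin_cases i <;> rfl
  have hspec : 2 * x 0 * ev2 g (x 0) (x 1) = 0 := by
    simpa [show (1 : ℂ) - -1 = 2 by norm_num, eq_comm] using h (x 0) 1 (x 1) (-1)
  rw [ev2, hx_eq] at hspec
  exact (mul_eq_zero.mp hspec).resolve_left (mul_ne_zero two_ne_zero hx)
end

section
/- Let β, γ ∈ ℂ and let h₁ ∈ ℂ[λ] be a polynomial satisfying ((β−1)∂ + β(λ+ν) − γ)·h₁(λ) = (∂ + β(λ+ν) + γ)·h₁(μ) for all ∂, λ, μ, ν ∈ ℂ. If (β, γ) ≠ (2, 0), then h₁ = 0; if β = 2 and γ = 0, then h₁ is a constant polynomial. -/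
open Polynomial

/-! Comparing the coefficients of `d` in the identity gives `(β - 1) h₁(l) = h₁(m)` for all `l, m`.
Taking `l = m` yields `(β - 2) h₁ = 0`, so `h₁ = 0` unless `β = 2`, in which case `h₁` takes a single
value and is constant. With `β = 2` and everything set to `0` the identity reads
`-γ h₁(0) = γ h₁(0)`, which kills the constant unless `γ = 0`. -/

section CommRing

variable {R : Type*} [CommRing R] {β γ : R} {p : R[X]}

theorem sub_one_mul_eval_eq_eval
    (h : ∀ d l m n : R, ((β - 1) * d + β * (l + n) - γ) * p.eval l
      = (d + β * (l + n) + γ) * p.eval m) (l m : R) :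
    (β - 1) * p.eval l = p.eval m := by
  linear_combination h 1 l m 0 - h 0 l m 0

theorem two_mul_mul_eval_zero_eq_zero
    (h : ∀ d l m n : R, ((β - 1) * d + β * (l + n) - γ) * p.eval l
      = (d + β * (l + n) + γ) * p.eval m) :
    2 * γ * p.eval 0 = 0 := by
  linear_combination -h 0 0 0 0

end CommRing

section InfiniteDomain

variable {R : Type*} [CommRing R] [IsDomain R] [Infinite R] {β : R} {p : R[X]}

theorem eq_zero_of_sub_one_mul_eval_eq_eval (hβ : β ≠ 2)
    (key : ∀ l m : R, (β - 1) * p.eval l = p.eval m) : p = 0 := by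
  refine Polynomial.funext fun x => ?_
  have hx : (β - 2) * p.eval x = 0 := by linear_combination key x x
  simpa using (mul_eq_zero.1 hx).resolve_left (sub_ne_zero.2 hβ)

theorem eq_C_eval_zero_of_forall_eval_eq (key : ∀ l m : R, p.eval l = p.eval m) :
    p = C (p.eval 0) :=
  Polynomial.funext fun x => by rw [eval_C, key]

end InfiniteDomain

theorem stmt11 (β γ : ℂ) (h₁ : Polynomial ℂ)
    (h : ∀ d l m n : ℂ, ((β - 1) * d + β * (l + n) - γ) * h₁.eval l
      = (d + β * (l + n) + γ) * h₁.eval m) :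
    ((β, γ) ≠ (2, 0) → h₁ = 0) ∧ (β = 2 ∧ γ = 0 → ∃ c : ℂ, h₁ = Polynomial.C c) := by
  have key := sub_one_mul_eval_eq_eval h
  by_cases hβ : β = 2
  · subst hβ
    have hC : h₁ = C (h₁.eval 0) :=
      eq_C_eval_zero_of_forall_eval_eq fun l m => by linear_combination key l m
    refine ⟨fun hne => ?_, fun _ => ⟨_, hC⟩⟩
    have hγ : γ ≠ 0 := fun hγ => hne (by rw [hγ])
    have h0 : h₁.eval 0 = 0 := by
      simpa [hγ] using two_mul_mul_eval_zero_eq_zero h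
    rw [hC, h0, C_0]
  · exact ⟨fun _ => eq_zero_of_sub_one_mul_eval_eq_eval hβ key, fun hb => absurd hb.1 hβ⟩
end

section
/- Let g ∈ ℂ[∂] be a polynomial satisfying (∂+2λ)·g(∂) = (∂+λ)·g(∂+λ) + λ·g(−λ) for all ∂, λ ∈ ℂ. Then g is linear: there exist g₀, g₁ ∈ ℂ with g(∂) = g₀ + g₁·∂. -/
open Polynomial

/-!
Subtracting the equation at `(d, 1)` from the one at `(d + 1, 1)` eliminates the term `g(-1)` and
leaves `(d + 2) (g(d) - 2 g(d + 1) + g(d + 2)) = 0`. So the second differences of `g` vanish along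
`0, 1, 2, …`, whence `g` agrees with an affine polynomial on infinitely many points and is affine.
-/

theorem add_add_two_eq_of_functional_eq {R : Type*} [CommRing R] [IsDomain R] {g : R → R}
    (h : ∀ d l : R, (d + 2 * l) * g d = (d + l) * g (d + l) + l * g (-l)) {d : R}
    (hd : d + 2 ≠ 0) : g d + g (d + 2) = 2 * g (d + 1) := by
  have h₂ := h (d + 1) 1
  rw [show d + 1 + 1 = d + 2 by ring] at h₂
  apply mul_left_cancel₀ hd
  linear_combination h d 1 - h₂

theorem eq_add_mul_of_add_add_two_eq {R : Type*} [CommRing R] (f : ℕ → R)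
    (hf : ∀ n, f n + f (n + 2) = 2 * f (n + 1)) (n : ℕ) : f n = f 0 + n * (f 1 - f 0) := by
  induction n using Nat.twoStepInduction with
  | zero => simp
  | one => simp
  | more n ih₀ ih₁ =>
    push_cast at ih₁ ⊢
    linear_combination hf n - ih₀ + 2 * ih₁

theorem Polynomial.eq_of_eval_natCast_eq {R : Type*} [CommRing R] [IsDomain R] [CharZero R]
    {p q : R[X]} (h : ∀ n : ℕ, p.eval (n : R) = q.eval (n : R)) : p = q :=
  eq_of_infinite_eval_eq p q <|
    (Set.infinite_range_of_injective Nat.cast_injective).mono <| by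
      rintro _ ⟨n, rfl⟩
      exact h n

theorem stmt13 (g : Polynomial ℂ)
    (h : ∀ d l : ℂ, (d + 2 * l) * g.eval d = (d + l) * g.eval (d + l) + l * g.eval (-l)) :
    ∃ g₀ g₁ : ℂ, ∀ d : ℂ, g.eval d = g₀ + g₁ * d := by
  have hsecond (n : ℕ) :
      g.eval (n : ℂ) + g.eval ((n + 2 : ℕ) : ℂ) = 2 * g.eval ((n + 1 : ℕ) : ℂ) := by
    push_cast
    exact add_add_two_eq_of_functional_eq h (by exact_mod_cast (n + 1).succ_ne_zero)
  obtain ⟨a, b, hg⟩ : ∃ a b : ℂ, g = C a + C b * X :=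
    ⟨g.eval 0, g.eval 1 - g.eval 0, eq_of_eval_natCast_eq fun n => by
      rw [eq_add_mul_of_add_add_two_eq (fun n : ℕ => g.eval (n : ℂ)) hsecond n]
      simp only [eval_add, eval_C, eval_mul, eval_X, Nat.cast_zero, Nat.cast_one]
      ring⟩
  exact ⟨a, b, fun d => by simp [hg]⟩
end

section
/- Let b, τ ∈ ℂ with τ ≠ 0, and let h ∈ ℂ[∂,μ] be a polynomial satisfying (b−τ)·h(∂+λ, μ) − b·h(∂,μ) = τ·h(∂, λ+μ) for all ∂, λ, μ ∈ ℂ. Then h = 0. -/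
open Polynomial

theorem eq_zero_of_forall_ev2_eq_zero {f : MvPolynomial (Fin 2) ℂ}
    (hf : ∀ x y, ev2 f x y = 0) : f = 0 := by
  refine MvPolynomial.funext fun x => ?_
  have hx : ![x 0, x 1] = x := FinVec.etaExpand_eq x
  simpa only [ev2, map_zero, hx] using hf (x 0) (x 1)

theorem stmt16 (b τ : ℂ) (hτ : τ ≠ 0) (f : MvPolynomial (Fin 2) ℂ)
    (h : ∀ d l m : ℂ, (b - τ) * ev2 f (d + l) m - b * ev2 f d m = τ * ev2 f d (l + m)) :
    f = 0 := by
  refine eq_zero_of_forall_ev2_eq_zero fun d m => ?_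
  have hl0 := h d 0 m
  rw [add_zero, zero_add] at hl0
  have h2τ : (2 * τ) * ev2 f d m = 0 := by linear_combination -hl0
  exact (mul_eq_zero.mp h2τ).resolve_left (mul_ne_zero two_ne_zero hτ)
end

section
/- Let Δ₀, Δ₁, a ∈ ℂ and let h ∈ ℂ[∂,μ] be a nonzero polynomial satisfying (∂ + μ + Δ₀λ + a)·h(∂,μ) − (∂ + Δ₁λ + a)·h(∂+λ, μ) = μ·h(∂, λ+μ) for all ∂, λ, μ ∈ ℂ. Then Δ₀ − Δ₁ ∈ {0, 1, 2, 3}. -/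
/-!
Write `h(∂ - a, μ) = ∑ c j p • ∂ ^ p * μ ^ j`. After this shift the equation no longer involves
`a`, and comparing the coefficients of `λ ^ (k + 1) * μ ^ j * ∂ ^ p` on both sides gives

* for `k = 0` the Euler relation `(Δ₀ - Δ₁ - j - p) c j p = 0`, so `Δ₀ - Δ₁ = j + p` as soon as
  a single coefficient `c j p` is nonzero;
* for `k ≥ 1` the recurrence
  `(C(p+k, k+1) + Δ₁ C(p+k, k)) c j (p+k) + C(j+k, k+1) c (j+k) p = 0`.

With `k = 1` the recurrence moves a nonzero coefficient from row `j + 2` to row `j + 1`, so some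
row `0` or `1` has a nonzero entry. Two instances of the recurrence force `p ≤ 1` in row `0`, and
five instances force `p ≤ 2` in row `1`; hence `Δ₀ - Δ₁ = j + p ≤ 3`.
-/

open Polynomial

theorem coeff_X_mul_hasseDeriv_succ {R : Type*} [Semiring R] (q : R[X]) (k p : ℕ) :
    (X * hasseDeriv (k + 1) q).coeff p = (p + k).choose (k + 1) * q.coeff (p + k) := by
  cases p with
  | zero => simp
  | succ p => rw [coeff_X_mul, hasseDeriv_coeff, show p + 1 + k = p + (k + 1) by omega]

theorem coeff_linear_mul {R : Type*} [Semiring R] (u v : R) (T : R[X]) (k : ℕ) :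
    ((C u + C v * X) * T).coeff (k + 1) = u * T.coeff (k + 1) + v * T.coeff k := by
  rw [add_mul, coeff_add, coeff_C_mul, mul_assoc, coeff_C_mul, coeff_X_mul]

theorem coeff_X_mul_taylor {R : Type*} [CommRing R] (p : R[X]) (l : R) (j : ℕ) :
    (X * taylor l p).coeff j = (hasseDeriv j (X * p) - X * hasseDeriv j p).eval l := by
  have h := congrArg (coeff · j) (taylor_mul l X p)
  simp only [taylor_X, add_mul, coeff_add, coeff_C_mul, taylor_coeff] at h
  simp [h]

theorem coeff_hasseDeriv_X_mul_sub {R : Type*} [Ring R] (p : R[X]) (j k : ℕ) :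
    (hasseDeriv j (X * p) - X * hasseDeriv j p).coeff (k + 1)
      = (j + k).choose (k + 1) * p.coeff (j + k) := by
  have pascal : (k + j + 1).choose j = (k + j).choose j + (j + k).choose (k + 1) := by
    rw [Nat.choose_symm_of_eq_add (show k + j + 1 = j + (k + 1) by omega), Nat.choose_succ_succ',
      Nat.choose_symm_add, add_comm j k]
  rw [coeff_sub, coeff_X_mul, hasseDeriv_coeff, hasseDeriv_coeff, add_right_comm, coeff_X_mul,
    pascal, add_comm j k, Nat.cast_add, add_mul, add_sub_cancel_left]

theorem cast_choose_eq_descPochhammer_div {K : Type*} [Field K] [CharZero K] (n k : ℕ) :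
    (n.choose k : K) = (descPochhammer K k).eval (n : K) / k.factorial := by
  rw [descPochhammer_eval_eq_descFactorial, Nat.descFactorial_eq_factorial_mul_choose,
    Nat.cast_mul, mul_div_cancel_left₀ _ (Nat.cast_ne_zero.mpr k.factorial_ne_zero)]

theorem evalEval_aeval {R σ : Type*} [CommSemiring R] (x m : R) (g : σ → R[X][X])
    (f : MvPolynomial σ R) :
    (MvPolynomial.aeval g f).evalEval x m = MvPolynomial.eval (fun i => (g i).evalEval x m) f := by
  induction f using MvPolynomial.induction_on <;> simp_all

/-- The compatibility equation with `a = 0`, for `h(∂, μ) = P.evalEval ∂ μ`. -/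
def IsCompatible {K : Type*} [CommRing K] (Δ₀ Δ₁ : K) (P : K[X][X]) : Prop :=
  ∀ x l m : K, (x + m + Δ₀ * l) * P.evalEval x m - (x + Δ₁ * l) * P.evalEval (x + l) m
    = m * P.evalEval x (l + m)

section Coefficients

variable {K : Type*} [CommRing K] [IsDomain K] [Infinite K] {Δ₀ Δ₁ : K} {P : K[X][X]}

/-- The coefficient of `μ ^ j` in the compatibility equation at `∂ = x`, `λ = l`. -/
theorem IsCompatible.coeff_relation (hP : IsCompatible Δ₀ Δ₁ P) (x l : K) (j : ℕ) :
    (x + Δ₀ * l) * (P.coeff j).eval x + (X * P.map (evalRingHom x)).coeff j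
      - (x + Δ₁ * l) * (P.coeff j).eval (x + l)
      = (hasseDeriv j (X * P.map (evalRingHom x))
          - X * hasseDeriv j (P.map (evalRingHom x))).eval l := by
  have h : C (x + Δ₀ * l) * P.map (evalRingHom x) - C (x + Δ₁ * l) * P.map (evalRingHom (x + l))
      - X * (taylor l (P.map (evalRingHom x)) - P.map (evalRingHom x)) = 0 := by
    refine Polynomial.funext fun m => ?_
    simp only [eval_sub, eval_mul, eval_C, eval_X, taylor_eval, map_evalRingHom_eval, eval_zero,
      add_comm m l]
    linear_combination hP x l m
  have hj := congrArg (coeff · j) h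
  simp only [coeff_sub, coeff_C_mul, coeff_map, coe_evalRingHom, mul_sub, coeff_X_mul_taylor,
    coeff_zero] at hj
  linear_combination hj

/-- The coefficient of `λ ^ (k + 1) * μ ^ j` in the compatibility equation. -/
theorem IsCompatible.hasseDeriv_relation (hP : IsCompatible Δ₀ Δ₁ P) (j k : ℕ) :
    X * hasseDeriv (k + 1) (P.coeff j) + C Δ₁ * hasseDeriv k (P.coeff j)
      + C ((j + k).choose (k + 1) : K) * P.coeff (j + k)
      = if k = 0 then C Δ₀ * P.coeff j else 0 := by
  refine Polynomial.funext fun x => ?_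
  have h : (C x + C Δ₀ * X) * C ((P.coeff j).eval x) + C ((X * P.map (evalRingHom x)).coeff j)
      - (C x + C Δ₁ * X) * taylor x (P.coeff j)
      = hasseDeriv j (X * P.map (evalRingHom x)) - X * hasseDeriv j (P.map (evalRingHom x)) := by
    refine Polynomial.funext fun l => ?_
    rw [← hP.coeff_relation x l j]
    simp only [eval_sub, eval_mul, eval_add, eval_C, eval_X, taylor_eval, add_comm l x]
  have hk := congrArg (coeff · (k + 1)) h
  rw [coeff_hasseDeriv_X_mul_sub] at hk
  simp only [coeff_sub, coeff_add, coeff_linear_mul, coeff_C_succ, coeff_C, taylor_coeff,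
    coeff_map, coe_evalRingHom] at hk
  rcases k with _ | k
  · simp only [if_true, eval_add, eval_mul, eval_X, eval_C, hasseDeriv_zero', add_zero] at hk ⊢
    linear_combination -hk
  · simp only [Nat.add_one_ne_zero, if_false, eval_add, eval_mul, eval_X, eval_C,
      eval_zero] at hk ⊢
    linear_combination -hk

theorem IsCompatible.coeff_euler (hP : IsCompatible Δ₀ Δ₁ P) (j p : ℕ) :
    ((p : K) + Δ₁ + j) * (P.coeff j).coeff p = Δ₀ * (P.coeff j).coeff p := by
  have h := congrArg (coeff · p) (hP.hasseDeriv_relation j 0)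
  simp only [coeff_add, coeff_X_mul_hasseDeriv_succ, coeff_C_mul, hasseDeriv_zero', if_true,
    add_zero, zero_add, Nat.choose_one_right] at h
  linear_combination h

theorem IsCompatible.coeff_recurrence (hP : IsCompatible Δ₀ Δ₁ P) (j k p : ℕ) :
    (((p + k + 1).choose (k + 2) : K) + Δ₁ * (p + k + 1).choose (k + 1))
        * (P.coeff j).coeff (p + k + 1)
      + ((j + k + 1).choose (k + 2) : K) * (P.coeff (j + k + 1)).coeff p = 0 := by
  have h := congrArg (coeff · p) (hP.hasseDeriv_relation j (k + 1))
  simp only [coeff_add, coeff_X_mul_hasseDeriv_succ, coeff_C_mul, hasseDeriv_coeff,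
    Nat.add_one_ne_zero, if_false, coeff_zero] at h
  linear_combination h

end Coefficients

section Recurrence

variable {K : Type*} [Field K] [CharZero K] {Δ₀ Δ₁ : K} {P : K[X][X]}

theorem IsCompatible.sub_eq_of_coeff_ne_zero (hP : IsCompatible Δ₀ Δ₁ P) {j p : ℕ}
    (h : (P.coeff j).coeff p ≠ 0) : Δ₀ - Δ₁ = j + p := by
  linear_combination -mul_right_cancel₀ h (hP.coeff_euler j p)

theorem IsCompatible.coeff_ne_zero_of_coeff_add_two_ne_zero (hP : IsCompatible Δ₀ Δ₁ P)
    {j p : ℕ} (h : (P.coeff (j + 2)).coeff p ≠ 0) : (P.coeff (j + 1)).coeff (p + 1) ≠ 0 := by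
  intro h0
  have := hP.coeff_recurrence (j + 1) 0 p
  simp [add_assoc, h0, h, Nat.choose_eq_zero_iff] at this

theorem IsCompatible.le_one_of_coeff_zero_ne_zero (hP : IsCompatible Δ₀ Δ₁ P) {p : ℕ}
    (hp : (P.coeff 0).coeff p ≠ 0) : p ≤ 1 := by
  by_contra! h
  obtain ⟨q, rfl⟩ : ∃ q, p = q + 2 := ⟨p - 2, by omega⟩
  have e₂ := hP.coeff_recurrence 0 0 (q + 1)
  have e₃ := hP.coeff_recurrence 0 1 q
  simp only [add_zero, zero_add, add_assoc, Nat.reduceAdd, cast_choose_eq_descPochhammer_div,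
    descPochhammer_succ_eval, descPochhammer_one, eval_X, Nat.factorial, Nat.cast_add,
    Nat.cast_ofNat, Nat.cast_one] at e₂ e₃
  have key : (q + 2) * (q + 1) * (q + 3) * (P.coeff 0).coeff (q + 2) = 0 := by
    linear_combination 6 * (q + 1) * e₂ - 12 * e₃
  exact mul_ne_zero (by exact_mod_cast (by positivity : (q + 2) * (q + 1) * (q + 3) ≠ 0)) hp key

theorem IsCompatible.le_two_of_coeff_one_ne_zero (hP : IsCompatible Δ₀ Δ₁ P) {p : ℕ}
    (hp : (P.coeff 1).coeff p ≠ 0) : p ≤ 2 := by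
  by_contra! h
  obtain ⟨q, rfl⟩ : ∃ q, p = q + 3 := ⟨p - 3, by omega⟩
  have e₂ := hP.coeff_recurrence 1 0 (q + 2)
  have e₃ := hP.coeff_recurrence 1 1 (q + 1)
  have e₄ := hP.coeff_recurrence 1 2 q
  have f₂ := hP.coeff_recurrence 2 0 (q + 1)
  have f₃ := hP.coeff_recurrence 2 1 q
  simp only [add_zero, zero_add, add_assoc, Nat.reduceAdd, cast_choose_eq_descPochhammer_div,
    descPochhammer_succ_eval, descPochhammer_one, eval_X, Nat.factorial, Nat.cast_add,
    Nat.cast_ofNat, Nat.cast_one] at e₂ e₃ e₄ f₂ f₃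
  set c := (P.coeff 1).coeff (q + 3)
  -- `e₂, e₃, e₄` express the coefficients in rows 2, 3, 4 through `c`; `R₁, R₂` say that this
  -- is consistent with `f₂, f₃`.
  have R₁ : (4 * Δ₁ ^ 2 + 4 * (q + 3) * Δ₁ + (q + 1) * (q + 4)) * ((q + 3) * (q + 2) * c)
      = 0 := by
    linear_combination 4 * ((q + 2) * (q + 1) / 2 + Δ₁ * (q + 2)) * e₂ + 12 * e₃ - 4 * f₂
  have R₂ : (6 * Δ₁ ^ 2 + (5 * q + 14) * Δ₁ + q * (q + 4)) * ((q + 3) * (q + 2) * (q + 1) * c)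
      = 0 := by
    linear_combination 12 * ((q + 2) * (q + 1) * q / 6 + Δ₁ * (q + 2) * (q + 1) / 2) * e₂
      + 48 * e₄ - 12 * f₃
  have r₁ := (mul_eq_zero.mp R₁).resolve_right
    (mul_ne_zero (by exact_mod_cast (by positivity : (q + 3) * (q + 2) ≠ 0)) hp)
  have r₂ := (mul_eq_zero.mp R₂).resolve_right
    (mul_ne_zero (by exact_mod_cast (by positivity : (q + 3) * (q + 2) * (q + 1) ≠ 0)) hp)
  have key : ((q + 4) * (q + 5) : K) = 0 := by
    linear_combination (2 * Δ₁ + q + 3) * (3 * r₁ - 2 * r₂) - (q + 4) * r₁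
  exact absurd key (by exact_mod_cast (by positivity : (q + 4) * (q + 5) ≠ 0))

theorem IsCompatible.sub_mem_of_coeff_ne_zero (hP : IsCompatible Δ₀ Δ₁ P) :
    ∀ {j p : ℕ}, (P.coeff j).coeff p ≠ 0 → Δ₀ - Δ₁ ∈ ({0, 1, 2, 3} : Set K)
  | 0, p, h => by
    have hp := hP.le_one_of_coeff_zero_ne_zero h
    rw [hP.sub_eq_of_coeff_ne_zero h]
    interval_cases p <;> simp
  | 1, p, h => by
    have hp := hP.le_two_of_coeff_one_ne_zero h
    rw [hP.sub_eq_of_coeff_ne_zero h]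
    interval_cases p <;> norm_num
  | _ + 2, _, h => hP.sub_mem_of_coeff_ne_zero (hP.coeff_ne_zero_of_coeff_add_two_ne_zero h)

theorem IsCompatible.sub_mem (hP : IsCompatible Δ₀ Δ₁ P) (hP0 : P ≠ 0) :
    Δ₀ - Δ₁ ∈ ({0, 1, 2, 3} : Set K) :=
  hP.sub_mem_of_coeff_ne_zero (leadingCoeff_ne_zero.mpr (leadingCoeff_ne_zero.mpr hP0))

end Recurrence

theorem evalEval_aeval_shift (a x m : ℂ) (f : MvPolynomial (Fin 2) ℂ) :
    (MvPolynomial.aeval ![C (X - C a), X] f).evalEval x m = ev2 f (x - a) m := by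
  have hg : (fun i => (![C (X - C a), X] i).evalEval x m) = ![x - a, m] := by
    funext i
    fin_cases i <;> simp [evalEval_C]
  rw [evalEval_aeval, hg, ev2]

theorem aeval_shift_ne_zero (a : ℂ) {f : MvPolynomial (Fin 2) ℂ} (hf : f ≠ 0) :
    MvPolynomial.aeval ![C (X - C a), X] f ≠ 0 := by
  refine fun h0 => hf (MvPolynomial.funext fun v => ?_)
  have hv := evalEval_aeval_shift a (v 0 + a) (v 1) f
  rw [h0, evalEval_zero, add_sub_cancel_right, ev2] at hv
  rw [map_zero, hv]
  congr
  funext i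
  fin_cases i <;> rfl

theorem stmt17 (Δ₀ Δ₁ a : ℂ) (f : MvPolynomial (Fin 2) ℂ) (hf : f ≠ 0)
    (h : ∀ d l m : ℂ, (d + m + Δ₀ * l + a) * ev2 f d m
      - (d + Δ₁ * l + a) * ev2 f (d + l) m = m * ev2 f d (l + m)) :
    Δ₀ - Δ₁ ∈ ({0, 1, 2, 3} : Set ℂ) := by
  refine IsCompatible.sub_mem (fun x l m => ?_) (aeval_shift_ne_zero a hf)
  simp only [evalEval_aeval_shift, show x + l - a = x - a + l by ring]
  linear_combination h (x - a) l m
end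

section
/- Let b ∈ ℂ and let f ∈ ℂ[x,y] satisfy (x+by)·f(x+y, z) − (x+by+z)·f(x,z) = −z·f(x, y+z) for all x, y, z ∈ ℂ (i.e., the case a = b, c = 0 of the key equation). If f is a nontrivial solution with a − b = 0, then f is a constant polynomial. -/
/-!
Differentiating the equation in `y` and then setting `y = 0` gives Euler's identity
`x ∂ₓf + z ∂_z f = 0`. Comparing coefficients, `(deg m) • coeff m f = 0` for every
monomial `m`, so only the constant term of `f` survives.
-/

namespace MvPolynomial

variable {R σ : Type*} [CommSemiring R]

theorem derivation_aeval {A M : Type*} [CommSemiring A] [Algebra R A] [AddCommMonoid M]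
    [Module A M] [Module R M] [IsScalarTower R A M] [Fintype σ]
    (D : Derivation R A M) (s : σ → A) (f : MvPolynomial σ R) :
    D (aeval s f) = ∑ i, aeval s (pderiv i f) • D (s i) := by
  classical
  induction f using MvPolynomial.induction_on with
  | C a => simp
  | add p q hp hq => simp only [map_add, hp, hq, add_smul, Finset.sum_add_distrib]
  | mul_X p j hp =>
    simp [Derivation.leibniz, pderiv_X, Pi.single_apply, hp, add_smul, Finset.sum_add_distrib,
      Finset.smul_sum, smul_smul, mul_comm, apply_ite, ite_smul, add_comm]

theorem coeff_X_mul_pderiv (i : σ) (f : MvPolynomial σ R) (m : σ →₀ ℕ) :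
    coeff m (X i * pderiv i f) = m i • coeff m f := by
  induction f using MvPolynomial.induction_on' with
  | monomial n r =>
    classical
    rw [X_mul_pderiv_monomial, coeff_smul, coeff_monomial]
    split_ifs with h <;> simp [h]
  | add p q hp hq => simp only [map_add, mul_add, coeff_add, hp, hq, smul_add]

theorem coeff_sum_X_mul_pderiv [Fintype σ] (f : MvPolynomial σ R) (m : σ →₀ ℕ) :
    coeff m (∑ i, X i * pderiv i f) = m.degree • coeff m f := by
  simp only [coeff_sum, coeff_X_mul_pderiv, Finsupp.degree_eq_sum, Finset.sum_smul]

theorem eq_C_of_sum_X_mul_pderiv_eq_zero [Fintype σ] [IsAddTorsionFree R] {f : MvPolynomial σ R}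
    (hf : ∑ i, X i * pderiv i f = 0) : f = C (coeff 0 f) := by
  classical
  ext m
  rcases eq_or_ne m 0 with rfl | hm
  · simp
  · have h := coeff_sum_X_mul_pderiv f m
    rw [hf, coeff_zero, eq_comm, smul_eq_zero, Finsupp.degree_eq_zero_iff] at h
    rw [coeff_C, if_neg hm.symm]
    exact h.resolve_left hm

end MvPolynomial

section Shear
open MvPolynomial
variable {R : Type*} [CommRing R]

/-- The substitution `(x, y, z) ↦ (x + α y, z + β y)`, with `x, y, z = X 0, X 1, X 2`. -/
noncomputable def shear (α β : R) : Fin 2 → MvPolynomial (Fin 3) R :=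
  ![X 0 + C α * X 1, X 2 + C β * X 1]

theorem eval_bind₁_shear (α β : R) (v : Fin 3 → R) (f : MvPolynomial (Fin 2) R) :
    eval v (bind₁ (shear α β) f) = eval ![v 0 + α * v 1, v 2 + β * v 1] f := by
  rw [eval, eval₂Hom_bind₁]
  congr 2
  funext i; fin_cases i <;> simp [shear]

theorem bind₁_bind₁_shear (α β : R) (f : MvPolynomial (Fin 2) R) :
    bind₁ ![X 0, 0, X 1] (bind₁ (shear α β) f) = f := by
  have : (fun i => bind₁ ![X 0, 0, X 1] (shear α β i)) = X := by
    funext i; fin_cases i <;> simp [shear]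
  rw [bind₁_bind₁, this]
  exact aeval_X_left_apply f

theorem pderiv_one_bind₁_shear (α β : R) (f : MvPolynomial (Fin 2) R) :
    pderiv 1 (bind₁ (shear α β) f) =
      bind₁ (shear α β) (C α * pderiv 0 f + C β * pderiv 1 f) := by
  rw [← aeval_eq_bind₁, derivation_aeval]
  simp [Fin.sum_univ_two, shear, mul_comm]

end Shear

section KeyEquation
open MvPolynomial
variable {R : Type*} [CommRing R]

/-- The equation of the theorem as a polynomial identity in `x, y, z = X 0, X 1, X 2`. -/
def KeyEquation (b : R) (f : MvPolynomial (Fin 2) R) : Prop :=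
  (X 0 + C b * X 1) * bind₁ (shear 1 0) f - (X 0 + C b * X 1 + X 2) * bind₁ (shear 0 0) f
    = -X 2 * bind₁ (shear 0 1) f

theorem KeyEquation.of_eval [IsDomain R] [Infinite R] {b : R} {f : MvPolynomial (Fin 2) R}
    (h : ∀ x y z : R, (x + b * y) * eval ![x + y, z] f - (x + b * y + z) * eval ![x, z] f
      = -z * eval ![x, y + z] f) : KeyEquation b f :=
  funext fun v => by simpa [eval_bind₁_shear, add_comm (v 1)] using h (v 0) (v 1) (v 2)

theorem KeyEquation.euler {b : R} {f : MvPolynomial (Fin 2) R} (hf : KeyEquation b f) :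
    X 0 * pderiv 0 f + X 1 * pderiv 1 f = 0 := by
  have hdy := congrArg
    (fun p => bind₁ (![X 0, 0, X 1] : Fin 3 → MvPolynomial (Fin 2) R) (pderiv 1 p)) hf
  simp only [map_sub, map_add, map_mul, map_neg, map_zero, map_one, Derivation.leibniz, smul_eq_mul,
    derivation_C, pderiv_X_self, pderiv_X_of_ne, ne_eq, Fin.reduceEq, not_false_eq_true,
    pderiv_one_bind₁_shear, bind₁_bind₁_shear, bind₁_X_right, algHom_C, algebraMap_eq,
    Matrix.cons_val] at hdy
  linear_combination hdy

end KeyEquation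

open Polynomial

theorem stmt19_general (b : ℂ) (f : MvPolynomial (Fin 2) ℂ)
    (h : ∀ x y z : ℂ, (x + b * y) * ev2 f (x + y) z - (x + b * y + z) * ev2 f x z
      = -z * ev2 f x (y + z)) :
    ∃ c : ℂ, f = MvPolynomial.C c :=
  ⟨_, MvPolynomial.eq_C_of_sum_X_mul_pderiv_eq_zero <| by
    simpa [Fin.sum_univ_two] using (KeyEquation.of_eval h).euler⟩

theorem stmt19 (b : ℂ) (f : MvPolynomial (Fin 2) ℂ) (hf : f ≠ 0)
    (h : ∀ x y z : ℂ, (x + b * y) * ev2 f (x + y) z - (x + b * y + z) * ev2 f x z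
      = -z * ev2 f x (y + z)) :
    ∃ c : ℂ, f = MvPolynomial.C c :=
  stmt19_general b f h
end
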